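/- arXiv:1907.04049 — 2 statements merged into one kernel-verified Lean document; each statement's English description precedes it below -/
import Mathlib

section
/- Let H be a complex Hilbert space and D a bounded self-adjoint invertible operator with sgn(D)·D = |D|. Define D_t := t^{-1}·sgn(D)·|D|^{t} for t ∈ (0,1]. Then ‖(D_t ± i)^{-1}‖ ≤ t·‖|D|^{-t}‖ ≤ t·max(1, ‖D^{-1}‖), and consequently ‖(D_t ± i)^{-1}‖ → 0 as t → 0⁺. -/
set_option synthInstance.maxHeartbeats 1000000
set_option maxHeartbeats 1000000

open Filter

/-- `|D| = (D²)^{1/2}` via continuous functional calculus. -/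
noncomputable def opAbs {H : Type*} [NormedAddCommGroup H] [InnerProductSpace ℂ H]
    [CompleteSpace H] (D : H →L[ℂ] H) : H →L[ℂ] H :=
  CFC.sqrt (D * D)

/-- `sgn D = D · |D|⁻¹`. -/
noncomputable def opSgn {H : Type*} [NormedAddCommGroup H] [InnerProductSpace ℂ H]
    [CompleteSpace H] (D : H →L[ℂ] H) : H →L[ℂ] H :=
  D * Ring.inverse (opAbs D)

/-- `D_t = t⁻¹ · sgn(D) · |D|^t` for `t ∈ (0,1]`. -/
noncomputable def opDt {H : Type*} [NormedAddCommGroup H] [InnerProductSpace ℂ H]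
    [CompleteSpace H] (D : H →L[ℂ] H) (t : ℝ) : H →L[ℂ] H :=
  t⁻¹ • (opSgn D * cfc (fun x : ℝ => x ^ t) (opAbs D))

open scoped InnerProductSpace in
/-- Resolvent lower bound for a selfadjoint operator at `±i`. -/
theorem aux_res_bound {H : Type*} [NormedAddCommGroup H] [InnerProductSpace ℂ H] [CompleteSpace H]
    (B : H →L[ℂ] H) (hB : IsSelfAdjoint B) (s : ℂ) (hs : s = Complex.I ∨ s = -Complex.I)
    (x : H) : ‖x‖ ≤ ‖(B - s • 1) x‖ := by
  have him : (⟪B x, x⟫_ℂ).im = 0 := by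
    have h1 : ⟪B x, x⟫_ℂ = ⟪x, B x⟫_ℂ := by
      conv_lhs => rw [← hB.adjoint_eq]
      exact ContinuousLinearMap.adjoint_inner_left B x x
    have h2 : ⟪x, B x⟫_ℂ = starRingEnd ℂ ⟪B x, x⟫_ℂ := (inner_conj_symm _ _).symm
    exact Complex.conj_eq_iff_im.mp (h1.trans h2).symm
  have hs1 : ‖s‖ = 1 := by rcases hs with rfl | rfl <;> simp
  have happ : (B - s • 1) x = B x - s • x := by simp
  have key : ‖(B - s • 1) x‖ ^ 2 = ‖B x‖ ^ 2 + ‖x‖ ^ 2 := by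
    rw [happ, @norm_sub_sq ℂ]
    have hre : RCLike.re ⟪B x, s • x⟫_ℂ = 0 := by
      rw [inner_smul_right]
      rcases hs with rfl | rfl <;>
        simp [RCLike.re_to_complex, Complex.mul_re, him]
    rw [hre, norm_smul, hs1]
    ring
  have h2 : ‖x‖ ^ 2 ≤ ‖(B - s • 1) x‖ ^ 2 := by
    rw [key]; nlinarith [norm_nonneg (B x)]
  have := Real.sqrt_le_sqrt h2
  rwa [Real.sqrt_sq (norm_nonneg _), Real.sqrt_sq (norm_nonneg _)] at this

/-- If an invertible operator is bounded below by `1`, its inverse has norm at most `1`. -/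
theorem aux_inv_bound {H : Type*} [NormedAddCommGroup H] [InnerProductSpace ℂ H] [CompleteSpace H]
    (u : H →L[ℂ] H) (hu : IsUnit u) (h : ∀ x, ‖x‖ ≤ ‖u x‖) : ‖Ring.inverse u‖ ≤ 1 := by
  rw [← hu.unit_spec, Ring.inverse_unit]
  refine ContinuousLinearMap.opNorm_le_bound _ zero_le_one fun y => ?_
  have h2 := h ((↑hu.unit⁻¹ : H →L[ℂ] H) y)
  have h3 : u ((↑hu.unit⁻¹ : H →L[ℂ] H) y) = y := by
    have h4 : u * (↑hu.unit⁻¹ : H →L[ℂ] H) = 1 := by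
      simpa [hu.unit_spec] using hu.unit.mul_inv
    calc u ((↑hu.unit⁻¹ : H →L[ℂ] H) y) = (u * (↑hu.unit⁻¹ : H →L[ℂ] H)) y := rfl
      _ = y := by rw [h4]; rfl
  rw [h3] at h2
  simpa using h2

/-- A selfadjoint operator shifted by `±i` is invertible. -/
theorem aux_shift_unit {H : Type*} [NormedAddCommGroup H] [InnerProductSpace ℂ H]
    [CompleteSpace H] (B : H →L[ℂ] H) (hB : IsSelfAdjoint B) (s : ℂ)
    (hs : s = Complex.I ∨ s = -Complex.I) : IsUnit (B - s • 1) := by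
  have hns : s ∉ spectrum ℂ B := by
    intro hmem
    have h := (isSelfAdjoint_iff_isStarNormal_and_quasispectrumRestricts.mp hB).2
    have h2 := SpectrumRestricts.rightInvOn (a := B) (f := Complex.reCLM) h hmem
    have h3 : (s.re : ℂ) = s := by simpa using h2
    rcases hs with rfl | rfl <;> simp_all [Complex.ext_iff]
  have h := spectrum.notMem_iff.mp hns
  rw [Algebra.algebraMap_eq_smul_one] at h
  simpa using h.neg

/-- With `D` bounded self-adjoint invertible, `sgn(D)·D = |D|`,
and `D_t = t⁻¹ sgn(D)|D|^t`, one has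
`‖(D_t ± i)⁻¹‖ ≤ t‖|D|^{-t}‖ ≤ t·max(1,‖D⁻¹‖)` for `t ∈ (0,1]`, and
consequently `‖(D_t ± i)⁻¹‖ → 0` as `t → 0⁺`. -/
theorem stmt13 {H : Type*} [NormedAddCommGroup H] [InnerProductSpace ℂ H]
    [CompleteSpace H] (D : H →L[ℂ] H)
    (hDsa : IsSelfAdjoint D) (hDunit : IsUnit D) (hsgn : opSgn D * D = opAbs D) :
    ∀ s : ℂ, s = Complex.I ∨ s = -Complex.I →
      (∀ t : ℝ, t ∈ Set.Ioc (0 : ℝ) 1 →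
        ‖Ring.inverse (opDt D t + s • (1 : H →L[ℂ] H))‖ ≤
            t * ‖cfc (fun x : ℝ => x ^ (-t)) (opAbs D)‖ ∧
          t * ‖cfc (fun x : ℝ => x ^ (-t)) (opAbs D)‖ ≤
            t * max 1 ‖Ring.inverse D‖) ∧
        Tendsto (fun t : ℝ => ‖Ring.inverse (opDt D t + s • (1 : H →L[ℂ] H))‖)
          (nhdsWithin 0 (Set.Ioi 0)) (nhds 0) := by
  intro s hs
  -- the trivial case
  rcases subsingleton_or_nontrivial H with hH | hH
  · have hz : ∀ Y : H →L[ℂ] H, ‖Y‖ = 0 := fun Y => by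
      rw [Subsingleton.elim Y 0, norm_zero]
    constructor
    · intro t ht
      refine ⟨?_, ?_⟩
      · rw [hz, hz, mul_zero]
      · rw [hz, mul_zero]
        have h1 : (0:ℝ) ≤ max 1 ‖Ring.inverse D‖ := le_trans zero_le_one (le_max_left _ _)
        nlinarith [ht.1]
    · have : (fun t : ℝ => ‖Ring.inverse (opDt D t + s • (1 : H →L[ℂ] H))‖)
          = fun _ => (0:ℝ) := funext fun t => hz _
      rw [this]
      exact tendsto_const_nhds
  -- the main case
  have honeclass : NormOneClass (H →L[ℂ] H) := ⟨ContinuousLinearMap.norm_id⟩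
  -- basic spectral facts about D
  have hspecD0 : ∀ x ∈ spectrum ℝ D, x ≠ 0 := fun x hx h0 =>
    spectrum.zero_notMem ℝ hDunit (h0 ▸ hx)
  have hsub : spectrum ℝ D ⊆ {x : ℝ | x ≠ 0} := fun x hx => hspecD0 x hx
  -- |D| as a cfc of D
  have habs_cont : ContinuousOn (fun x : ℝ => |x|) (spectrum ℝ D) :=
    continuous_abs.continuousOn
  have hA : opAbs D = cfc (fun x : ℝ => |x|) D := by
    have h1 : (0:H →L[ℂ] H) ≤ D * D := by
      simpa [hDsa.star_eq] using star_mul_self_nonneg D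
    refine (CFC.sqrt_unique ?_ (cfc_nonneg (fun x _ => abs_nonneg x))).symm.symm
    rw [← cfc_mul _ _ D]
    calc cfc (fun x : ℝ => |x| * |x|) D = cfc (fun x : ℝ => x * x) D :=
          cfc_congr fun x _ => abs_mul_abs_self x
      _ = D * D := by rw [cfc_mul _ _ D, cfc_id' ℝ D]
  have hA_sa : IsSelfAdjoint (opAbs D) := hA ▸ cfc_predicate _ D
  have hspecA : spectrum ℝ (opAbs D) = (fun x : ℝ => |x|) '' spectrum ℝ D := by
    rw [hA]; exact cfc_map_spectrum _ D
  have hspecA_pos : ∀ y ∈ spectrum ℝ (opAbs D), 0 < y := by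
    intro y hy
    rw [hspecA] at hy
    obtain ⟨x, hx, rfl⟩ := hy
    exact abs_pos.mpr (hspecD0 x hx)
  -- continuity helpers
  have hcabsr : ∀ r : ℝ, ContinuousOn (fun x : ℝ => |x| ^ r) {x : ℝ | x ≠ 0} := by
    intro r x hx
    exact ((Real.continuousAt_rpow_const _ r
      (Or.inl (abs_ne_zero.mpr hx))).comp continuous_abs.continuousAt).continuousWithinAt
  have hcinv : ContinuousOn (fun x : ℝ => |x|⁻¹) {x : ℝ | x ≠ 0} :=
    continuous_abs.continuousOn.inv₀ fun x hx => abs_ne_zero.mpr hx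
  have hcrA : ∀ r : ℝ, ContinuousOn (fun y : ℝ => y ^ r) (spectrum ℝ (opAbs D)) := by
    intro r y hy
    exact (Real.continuousAt_rpow_const _ r
      (Or.inl (hspecA_pos y hy).ne')).continuousWithinAt
  -- the inverse of |D|
  have habsinv_cont : ContinuousOn (fun x : ℝ => |x|⁻¹) (spectrum ℝ D) := hcinv.mono hsub
  have hAinv : Ring.inverse (opAbs D) = cfc (fun x : ℝ => |x|⁻¹) D := by
    have h1 : opAbs D * cfc (fun x : ℝ => |x|⁻¹) D = 1 := by
      rw [hA, ← cfc_mul _ _ D habs_cont habsinv_cont]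
      calc cfc (fun x : ℝ => |x| * |x|⁻¹) D = cfc (fun _ : ℝ => (1:ℝ)) D :=
            cfc_congr fun x hx => mul_inv_cancel₀ (abs_ne_zero.mpr (hspecD0 x hx))
        _ = 1 := cfc_one ℝ D
    have h2 : cfc (fun x : ℝ => |x|⁻¹) D * opAbs D = 1 := by
      rw [hA, ← cfc_mul _ _ D habsinv_cont habs_cont]
      calc cfc (fun x : ℝ => |x|⁻¹ * |x|) D = cfc (fun _ : ℝ => (1:ℝ)) D :=
            cfc_congr fun x hx => inv_mul_cancel₀ (abs_ne_zero.mpr (hspecD0 x hx))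
        _ = 1 := cfc_one ℝ D
    have : Ring.inverse ((⟨opAbs D, cfc (fun x : ℝ => |x|⁻¹) D, h1, h2⟩ :
        (H →L[ℂ] H)ˣ) : H →L[ℂ] H) = cfc (fun x : ℝ => |x|⁻¹) D := Ring.inverse_unit _
    simpa using this
  -- sgn D as a cfc of D
  have hsgn_cont : ContinuousOn (fun x : ℝ => x * |x|⁻¹) (spectrum ℝ D) :=
    continuousOn_id.mul habsinv_cont
  have hS : opSgn D = cfc (fun x : ℝ => x * |x|⁻¹) D := by
    rw [opSgn, hAinv, cfc_mul (fun x : ℝ => x) _ D continuousOn_id habsinv_cont, cfc_id' ℝ D]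
  have hssq : s * s = -1 := by
    rcases hs with rfl | rfl <;> simp [Complex.I_mul_I]
  have hns1 : ‖-s‖ = 1 := by rcases hs with rfl | rfl <;> simp
  -- the inverse norm of D bounds reciprocals of spectrum points
  have hDinv_bd : ∀ x ∈ spectrum ℝ D, |x|⁻¹ ≤ ‖Ring.inverse D‖ := by
    intro x hx
    have hx0 : x ≠ 0 := hspecD0 x hx
    have h1u : ((Units.mk0 x hx0 : ℝˣ) : ℝ) ∈ spectrum ℝ (hDunit.unit : H →L[ℂ] H) := by
      simpa [hDunit.unit_spec] using hx
    have h2u := spectrum.inv_mem_iff.mp h1u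
    have h3u : ‖(((Units.mk0 x hx0)⁻¹ : ℝˣ) : ℝ)‖ ≤
        ‖((hDunit.unit⁻¹ : (H →L[ℂ] H)ˣ) : H →L[ℂ] H)‖ :=
      spectrum.norm_le_norm_of_mem h2u
    rw [← hDunit.unit_spec, Ring.inverse_unit]
    simpa [abs_inv] using h3u
  -- the main bound for each t
  have hbound : ∀ t : ℝ, t ∈ Set.Ioc (0 : ℝ) 1 →
      ‖Ring.inverse (opDt D t + s • (1 : H →L[ℂ] H))‖ ≤
          t * ‖cfc (fun x : ℝ => x ^ (-t)) (opAbs D)‖ ∧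
        t * ‖cfc (fun x : ℝ => x ^ (-t)) (opAbs D)‖ ≤ t * max 1 ‖Ring.inverse D‖ := by
    intro t ht
    obtain ⟨ht0, ht1⟩ := ht
    have hgp_cont : ContinuousOn (fun x : ℝ => x * |x|⁻¹ * |x| ^ t) (spectrum ℝ D) :=
      hsgn_cont.mul ((hcabsr t).mono hsub)
    have hgm_cont : ContinuousOn (fun x : ℝ => x * |x|⁻¹ * |x| ^ (-t)) (spectrum ℝ D) :=
      hsgn_cont.mul ((hcabsr (-t)).mono hsub)
    have habst_cont : ContinuousOn (fun x : ℝ => |x| ^ t) (spectrum ℝ D) :=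
      (hcabsr t).mono hsub
    -- opDt as a cfc of D
    have hcomp : cfc (fun y : ℝ => y ^ t) (opAbs D) = cfc (fun x : ℝ => |x| ^ t) D := by
      conv_lhs => rw [hA]
      refine (cfc_comp (fun y : ℝ => y ^ t) (fun x : ℝ => |x|) D hDsa ?_ habs_cont).symm
      rw [← hspecA]; exact hcrA t
    have hDt : opDt D t = t⁻¹ • cfc (fun x : ℝ => x * |x|⁻¹ * |x| ^ t) D := by
      rw [opDt, hS, hcomp, ← cfc_mul _ _ D hsgn_cont habst_cont]
    -- products of the two cfc's
    have hmulpm : cfc (fun x : ℝ => x * |x|⁻¹ * |x| ^ (-t)) D *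
        cfc (fun x : ℝ => x * |x|⁻¹ * |x| ^ t) D = 1 := by
      rw [← cfc_mul _ _ D hgm_cont hgp_cont]
      calc cfc (fun x : ℝ => (x * |x|⁻¹ * |x| ^ (-t)) * (x * |x|⁻¹ * |x| ^ t)) D
          = cfc (fun _ : ℝ => (1:ℝ)) D := by
            refine cfc_congr fun x hx => ?_
            have hx0 := hspecD0 x hx
            have habs0 : (0:ℝ) < |x| := abs_pos.mpr hx0
            have h1 : |x| ^ (-t) * |x| ^ t = 1 := by
              rw [← Real.rpow_add habs0]; simp
            show (x * |x|⁻¹ * |x| ^ (-t)) * (x * |x|⁻¹ * |x| ^ t) = 1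
            have e : (x * |x|⁻¹ * |x| ^ (-t)) * (x * |x|⁻¹ * |x| ^ t)
                = (x * x) * ((|x| * |x|)⁻¹) * (|x| ^ (-t) * |x| ^ t) := by
              rw [mul_inv]; ring
            rw [e, h1, abs_mul_abs_self, mul_one, mul_inv_cancel₀ (mul_ne_zero hx0 hx0)]
        _ = 1 := cfc_one ℝ D
    have hmulmp : cfc (fun x : ℝ => x * |x|⁻¹ * |x| ^ t) D *
        cfc (fun x : ℝ => x * |x|⁻¹ * |x| ^ (-t)) D = 1 := by
      rw [← hmulpm]
      exact ((cfc_commute_cfc _ _ D).eq).symm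
    -- B = t • cfc gm D is a two-sided inverse of opDt
    have hBDt : (t • cfc (fun x : ℝ => x * |x|⁻¹ * |x| ^ (-t)) D) * opDt D t = 1 := by
      rw [hDt, smul_mul_smul_comm, mul_inv_cancel₀ ht0.ne', one_smul, hmulpm]
    have hDtB : opDt D t * (t • cfc (fun x : ℝ => x * |x|⁻¹ * |x| ^ (-t)) D) = 1 := by
      rw [hDt, smul_mul_smul_comm, inv_mul_cancel₀ ht0.ne', one_smul, hmulmp]
    have hB_sa : IsSelfAdjoint (t • cfc (fun x : ℝ => x * |x|⁻¹ * |x| ^ (-t)) D) :=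
      IsSelfAdjoint.smul (star_trivial t) (cfc_predicate _ D)
    set Bop := t • cfc (fun x : ℝ => x * |x|⁻¹ * |x| ^ (-t)) D with hBop
    have hBs_unit : IsUnit (Bop - s • (1 : H →L[ℂ] H)) := aux_shift_unit Bop hB_sa s hs
    have hres := aux_res_bound Bop hB_sa s hs
    have hCnorm : ‖Ring.inverse (Bop - s • (1 : H →L[ℂ] H))‖ ≤ 1 :=
      aux_inv_bound _ hBs_unit hres
    set Cop := Ring.inverse (Bop - s • (1 : H →L[ℂ] H)) with hCop
    have hmc1 : (Bop - s • (1 : H →L[ℂ] H)) * Cop = 1 := Ring.mul_inverse_cancel _ hBs_unit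
    have hCop_eq : Cop = ((hBs_unit.unit⁻¹ : (H →L[ℂ] H)ˣ) : H →L[ℂ] H) := by
      have h := Ring.inverse_unit hBs_unit.unit
      rw [hBs_unit.unit_spec] at h
      rw [hCop, h]
    -- commutation facts
    have hcomm1 : Commute (opDt D t) Bop := by
      rw [hDt, hBop]
      exact ((cfc_commute_cfc _ _ D).smul_left t⁻¹).smul_right t
    have hcommDtBs : Commute (opDt D t) (Bop - s • (1 : H →L[ℂ] H)) :=
      hcomm1.sub_right ((Commute.one_right _).smul_right s)
    have hcommDtC : Commute (opDt D t) Cop := by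
      rw [hCop_eq]
      refine Commute.units_inv_right ?_
      rwa [hBs_unit.unit_spec]
    -- key computation
    have key : (opDt D t + s • (1 : H →L[ℂ] H)) * (Bop * Cop) = s • (1 : H →L[ℂ] H) := by
      have h5 : (opDt D t + s • (1 : H →L[ℂ] H)) * Bop = 1 + s • Bop := by
        rw [add_mul, hDtB, smul_mul_assoc, one_mul]
      have h6 : (1 : H →L[ℂ] H) + s • Bop = s • (Bop - s • (1 : H →L[ℂ] H)) := by
        rw [smul_sub, smul_smul, hssq, neg_one_smul, sub_neg_eq_add, add_comm]
      calc (opDt D t + s • (1 : H →L[ℂ] H)) * (Bop * Cop)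
          = ((opDt D t + s • (1 : H →L[ℂ] H)) * Bop) * Cop := (mul_assoc _ _ _).symm
        _ = (s • (Bop - s • (1 : H →L[ℂ] H))) * Cop := by rw [h5, h6]
        _ = s • ((Bop - s • (1 : H →L[ℂ] H)) * Cop) := smul_mul_assoc _ _ _
        _ = s • (1 : H →L[ℂ] H) := by rw [hmc1]
    have hcommBig : Commute (opDt D t + s • (1 : H →L[ℂ] H)) (Bop * Cop) := by
      have c1 : Commute (opDt D t + s • (1 : H →L[ℂ] H)) Bop :=
        hcomm1.add_left ((Commute.one_left Bop).smul_left s)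
      have c2 : Commute (opDt D t + s • (1 : H →L[ℂ] H)) Cop :=
        hcommDtC.add_left ((Commute.one_left Cop).smul_left s)
      exact c1.mul_right c2
    have hnss : (-s) * s = 1 := by rw [neg_mul, hssq, neg_neg]
    have p1 : (opDt D t + s • (1 : H →L[ℂ] H)) * ((-s) • (Bop * Cop)) = 1 := by
      rw [mul_smul_comm, key, smul_smul, hnss, one_smul]
    have p2 : ((-s) • (Bop * Cop)) * (opDt D t + s • (1 : H →L[ℂ] H)) = 1 := by
      rw [smul_mul_assoc, ← hcommBig.eq, key, smul_smul, hnss, one_smul]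
    have hinv : Ring.inverse (opDt D t + s • (1 : H →L[ℂ] H)) = (-s) • (Bop * Cop) := by
      have := Ring.inverse_unit (⟨opDt D t + s • (1 : H →L[ℂ] H),
        (-s) • (Bop * Cop), p1, p2⟩ : (H →L[ℂ] H)ˣ)
      simpa using this
    -- norm estimates
    have hnormB : ‖Bop‖ = t * ‖cfc (fun x : ℝ => x * |x|⁻¹ * |x| ^ (-t)) D‖ := by
      rw [hBop, norm_smul, Real.norm_eq_abs, abs_of_pos ht0]
    have hGle : ‖cfc (fun x : ℝ => x * |x|⁻¹ * |x| ^ (-t)) D‖ ≤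
        ‖cfc (fun y : ℝ => y ^ (-t)) (opAbs D)‖ := by
      refine norm_cfc_le (norm_nonneg _) fun x hx => ?_
      have hx0 := hspecD0 x hx
      have hmem : |x| ∈ spectrum ℝ (opAbs D) := by rw [hspecA]; exact ⟨x, hx, rfl⟩
      have hb := norm_apply_le_norm_cfc (fun y : ℝ => y ^ (-t)) (opAbs D) hmem (hcrA (-t)) hA_sa
      calc ‖x * |x|⁻¹ * |x| ^ (-t)‖ = ‖|x| ^ (-t)‖ := by
            rw [Real.norm_eq_abs, Real.norm_eq_abs, abs_mul, abs_mul, abs_inv, abs_abs,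
              mul_inv_cancel₀ (abs_ne_zero.mpr hx0), one_mul]
        _ ≤ _ := hb
    have first : ‖Ring.inverse (opDt D t + s • (1 : H →L[ℂ] H))‖ ≤
        t * ‖cfc (fun x : ℝ => x ^ (-t)) (opAbs D)‖ := by
      calc ‖Ring.inverse (opDt D t + s • (1 : H →L[ℂ] H))‖ = ‖(-s) • (Bop * Cop)‖ := by
            rw [hinv]
        _ = ‖Bop * Cop‖ := by rw [norm_smul, hns1, one_mul]
        _ ≤ ‖Bop‖ * ‖Cop‖ := norm_mul_le _ _
        _ ≤ ‖Bop‖ * 1 := mul_le_mul_of_nonneg_left hCnorm (norm_nonneg _)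
        _ = t * ‖cfc (fun x : ℝ => x * |x|⁻¹ * |x| ^ (-t)) D‖ := by rw [mul_one, hnormB]
        _ ≤ t * ‖cfc (fun x : ℝ => x ^ (-t)) (opAbs D)‖ :=
            mul_le_mul_of_nonneg_left hGle ht0.le
    have hA2 : ‖cfc (fun y : ℝ => y ^ (-t)) (opAbs D)‖ ≤ max 1 ‖Ring.inverse D‖ := by
      refine norm_cfc_le (le_trans zero_le_one (le_max_left _ _)) fun y hy => ?_
      have hy0 : 0 < y := hspecA_pos y hy
      rw [Real.norm_eq_abs, abs_of_nonneg (Real.rpow_nonneg hy0.le _)]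
      rcases le_or_gt 1 y with h1 | h1
      · exact le_trans (Real.rpow_le_one_of_one_le_of_nonpos h1 (neg_nonpos.mpr ht0.le))
          (le_max_left _ _)
      · obtain ⟨x, hx, rfl⟩ : ∃ x ∈ spectrum ℝ D, |x| = y := by
          rw [hspecA] at hy; obtain ⟨x, hx, hxy⟩ := hy; exact ⟨x, hx, hxy⟩
        have h2 : |x| ^ (-t) ≤ |x| ^ (-1:ℝ) :=
          Real.rpow_le_rpow_of_exponent_ge hy0 h1.le (neg_le_neg ht1)
        have h3 : |x| ^ (-1:ℝ) = |x|⁻¹ := Real.rpow_neg_one _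
        exact le_trans (h2.trans_eq h3) (le_trans (hDinv_bd x hx) (le_max_right _ _))
    exact ⟨first, mul_le_mul_of_nonneg_left hA2 ht0.le⟩
  refine ⟨hbound, ?_⟩
  -- the limit
  have hmem : Set.Ioc (0:ℝ) 1 ∈ nhdsWithin 0 (Set.Ioi 0) :=
    Ioc_mem_nhdsGT_of_mem (by constructor <;> norm_num)
  refine squeeze_zero' (g := fun t : ℝ => t * max 1 ‖Ring.inverse D‖)
    (eventually_of_mem hmem fun t _ => norm_nonneg _)
    (eventually_of_mem hmem fun t ht => ?_) ?_
  · exact le_trans (hbound t ht).1 (hbound t ht).2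
  · have : Tendsto (fun t : ℝ => t * max 1 ‖Ring.inverse D‖) (nhds 0) (nhds 0) := by
      simpa using ((continuous_mul_const (max 1 ‖Ring.inverse D‖)).tendsto (0:ℝ) :
        Tendsto (fun t : ℝ => t * max 1 ‖Ring.inverse D‖) _ _)
    exact this.mono_left nhdsWithin_le_nhds
end

section
/- Let H be a complex Hilbert space and let h be a bounded positive operator on H. Then h has dense range in H if and only if the set {h·K : K compact operator on H} is dense in the space of compact operators on H (with the operator norm). -/
open ContinuousLinearMap Metric Set
open scoped InnerProductSpace ComplexConjugate

/-- A bounded positive operator `h` on a complex Hilbert space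
has dense range if and only if the set `{h·K : K compact}` is dense (in
operator norm) in the space of compact operators. -/
theorem stmt16 {H : Type*} [NormedAddCommGroup H] [InnerProductSpace ℂ H]
    [CompleteSpace H] (h : H →L[ℂ] H) (hpos : h.IsPositive) :
    DenseRange (h : H → H) ↔
      ∀ T : H →L[ℂ] H, IsCompactOperator T →
        T ∈ closure {S : H →L[ℂ] H | ∃ K : H →L[ℂ] H, IsCompactOperator K ∧ S = h * K} := by
  constructor
  · intro hdense T hT
    rw [Metric.mem_closure_iff]
    intro δ hδ
    obtain ⟨C, hCc, hCim⟩ :=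
      IsCompactOperator.image_closedBall_subset_compact (f := (T : H →ₗ[ℂ] H)) hT 1
    obtain ⟨t, htfin, htcov⟩ :=
      (Metric.totallyBounded_iff.mp hCc.totallyBounded) (δ/4) (by positivity)
    have hden' := Metric.denseRange_iff.mp hdense
    choose y hy using fun c : H => hden' c (δ/4) (by positivity)
    obtain ⟨M, hM⟩ := (htfin.image fun c => ‖y c‖).bddAbove
    set M' : ℝ := max M 1 with hM'
    have hM'pos : (0:ℝ) < M' := lt_of_lt_of_le one_pos (le_max_right _ _)
    set ε : ℝ := δ / (8 * M') with hε
    have hεpos : 0 < ε := by positivity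
    set a : H →L[ℂ] H := h + (ε : ℂ) • 1 with ha
    have hcoer : ∀ x : H, ε * (‖x‖ * ‖x‖) ≤ RCLike.re ⟪a x, x⟫_ℂ := by
      intro x
      have h1 := hpos.inner_nonneg_left x
      have h2 : ⟪a x, x⟫_ℂ = ⟪h x, x⟫_ℂ + (starRingEnd ℂ) (ε : ℂ) * ⟪x, x⟫_ℂ := by
        simp only [ha, ContinuousLinearMap.add_apply, ContinuousLinearMap.smul_apply,
          ContinuousLinearMap.one_apply, inner_add_left, inner_smul_left]
      rw [h2, map_add]
      have h3 : RCLike.re ((starRingEnd ℂ) (ε : ℂ) * ⟪x, x⟫_ℂ) = ε * (‖x‖ * ‖x‖) := by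
        have him : (⟪x, x⟫_ℂ).im = 0 := inner_self_im (𝕜 := ℂ) x
        have hre : (⟪x, x⟫_ℂ).re = ‖x‖ * ‖x‖ := inner_self_eq_norm_mul_norm (𝕜 := ℂ) x
        rw [Complex.conj_ofReal]
        simp [Complex.mul_re, him, hre]
        left; rw [← Complex.ofReal_pow, Complex.ofReal_re]; ring
      rw [h3]
      have h1' := (RCLike.nonneg_iff.mp h1).1
      linarith
    have hball : ∀ x : H, ε * ‖x‖ ≤ ‖a x‖ := by
      intro x
      rcases eq_or_ne x 0 with rfl | hx
      · simp
      · have h2 := (hcoer x).trans ((RCLike.re_le_norm _).trans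
          (norm_inner_le_norm (𝕜 := ℂ) (a x) x))
        have hxpos : 0 < ‖x‖ := norm_pos_iff.mpr hx
        rw [← mul_assoc] at h2
        exact le_of_mul_le_mul_right h2 hxpos
    have hu : IsUnit a := by
      refine isUnit_of_forall_le_norm_inner_map a (c := ⟨ε, hεpos.le⟩)
        (by exact_mod_cast hεpos) fun x => ?_
      have := (hcoer x).trans (RCLike.re_le_norm _)
      calc ‖x‖ ^ 2 * ((⟨ε, hεpos.le⟩ : NNReal) : ℝ) = ε * (‖x‖ * ‖x‖) := by
            simp [sq]; ring
        _ ≤ ‖⟪a x, x⟫_ℂ‖ := this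
    set u := hu.unit with huu
    have hua : (↑u : H →L[ℂ] H) = a := hu.unit_spec
    have hinv : ∀ w : H, ‖(↑u⁻¹ : H →L[ℂ] H) w‖ ≤ ε⁻¹ * ‖w‖ := by
      intro w
      have h1 := hball ((↑u⁻¹ : H →L[ℂ] H) w)
      have h2 : a ((↑u⁻¹ : H →L[ℂ] H) w) = w := by
        have h3 : (↑u : H →L[ℂ] H) ((↑u⁻¹ : H →L[ℂ] H) w) = w := by
          rw [← ContinuousLinearMap.mul_apply, u.mul_inv, ContinuousLinearMap.one_apply]
        rwa [hua] at h3
      rw [h2] at h1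
      have h3 := mul_le_mul_of_nonneg_left h1 (inv_nonneg.mpr hεpos.le)
      rwa [← mul_assoc, inv_mul_cancel₀ hεpos.ne', one_mul] at h3
    have hid : ∀ z : H, (↑u⁻¹ : H →L[ℂ] H) (h z)
        = z - (ε : ℂ) • ((↑u⁻¹ : H →L[ℂ] H) z) := by
      intro z
      have h1 : h z = a z - (ε : ℂ) • z := by simp [ha]
      have h2 : (↑u⁻¹ : H →L[ℂ] H) (a z) = z := by
        rw [← hua, ← ContinuousLinearMap.mul_apply, u.inv_mul, ContinuousLinearMap.one_apply]
      rw [h1, map_sub, h2, map_smul]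
    have hrange : ∀ z : H, ‖(↑u⁻¹ : H →L[ℂ] H) (h z)‖ ≤ 2 * ‖z‖ := by
      intro z
      rw [hid]
      calc ‖z - (ε : ℂ) • ((↑u⁻¹ : H →L[ℂ] H) z)‖
          ≤ ‖z‖ + ‖(ε : ℂ) • ((↑u⁻¹ : H →L[ℂ] H) z)‖ := norm_sub_le _ _
        _ ≤ ‖z‖ + ε * (ε⁻¹ * ‖z‖) := by
            rw [norm_smul, Complex.norm_real, Real.norm_of_nonneg hεpos.le]
            have := hinv z
            nlinarith
        _ ≤ 2 * ‖z‖ := by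
            rw [← mul_assoc, mul_inv_cancel₀ hεpos.ne', one_mul]; linarith
    have hx1 : ∀ x : H, ‖x‖ ≤ 1 →
        ‖(ε : ℂ) • ((↑u⁻¹ : H →L[ℂ] H) (T x))‖ ≤ 3 * δ / 4 := by
      intro x hx
      have hwC : T x ∈ C := hCim ⟨x, by simpa [mem_closedBall, dist_zero_right] using hx, rfl⟩
      obtain ⟨c, hct, hcb⟩ := mem_iUnion₂.mp (htcov hwC)
      rw [mem_ball, dist_eq_norm] at hcb
      have hyc := hy c
      rw [dist_eq_norm] at hyc
      have hMc : ‖y c‖ ≤ M' :=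
        le_trans (hM (Set.mem_image_of_mem _ hct)) (le_max_left _ _)
      have hdecomp : (↑u⁻¹ : H →L[ℂ] H) (T x)
          = (↑u⁻¹ : H →L[ℂ] H) (T x - c) + (↑u⁻¹ : H →L[ℂ] H) (c - h (y c))
            + (↑u⁻¹ : H →L[ℂ] H) (h (y c)) := by
        rw [← map_add, ← map_add]; congr 1; abel
      rw [hdecomp, norm_smul, Complex.norm_real, Real.norm_of_nonneg hεpos.le]
      have hsum : ‖(↑u⁻¹ : H →L[ℂ] H) (T x - c) + (↑u⁻¹ : H →L[ℂ] H) (c - h (y c))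
            + (↑u⁻¹ : H →L[ℂ] H) (h (y c))‖
          ≤ ε⁻¹ * ‖T x - c‖ + ε⁻¹ * ‖c - h (y c)‖ + 2 * ‖y c‖ := by
        calc _ ≤ ‖(↑u⁻¹ : H →L[ℂ] H) (T x - c) + (↑u⁻¹ : H →L[ℂ] H) (c - h (y c))‖
              + ‖(↑u⁻¹ : H →L[ℂ] H) (h (y c))‖ := norm_add_le _ _
          _ ≤ ‖(↑u⁻¹ : H →L[ℂ] H) (T x - c)‖ + ‖(↑u⁻¹ : H →L[ℂ] H) (c - h (y c))‖
              + ‖(↑u⁻¹ : H →L[ℂ] H) (h (y c))‖ := by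
              have := norm_add_le ((↑u⁻¹ : H →L[ℂ] H) (T x - c))
                ((↑u⁻¹ : H →L[ℂ] H) (c - h (y c)))
              linarith
          _ ≤ ε⁻¹ * ‖T x - c‖ + ε⁻¹ * ‖c - h (y c)‖ + 2 * ‖y c‖ := by
              have := hinv (T x - c)
              have := hinv (c - h (y c))
              have := hrange (y c)
              linarith
      have hεinv : ε * ε⁻¹ = 1 := mul_inv_cancel₀ hεpos.ne'
      have h2εM : 2 * ε * M' = δ / 4 := by
        rw [hε]; field_simp; ring
      calc ε * ‖(↑u⁻¹ : H →L[ℂ] H) (T x - c) + (↑u⁻¹ : H →L[ℂ] H) (c - h (y c))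
            + (↑u⁻¹ : H →L[ℂ] H) (h (y c))‖
          ≤ ε * (ε⁻¹ * ‖T x - c‖ + ε⁻¹ * ‖c - h (y c)‖ + 2 * ‖y c‖) := by
            exact mul_le_mul_of_nonneg_left hsum hεpos.le
        _ = ‖T x - c‖ + ‖c - h (y c)‖ + 2 * ε * ‖y c‖ := by
            field_simp
        _ ≤ δ / 4 + δ / 4 + δ / 4 := by
            have h5 : 2 * ε * ‖y c‖ ≤ 2 * ε * M' :=
              mul_le_mul_of_nonneg_left hMc (by positivity)
            rw [h2εM] at h5
            linarith
        _ ≤ 3 * δ / 4 := by linarith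
    refine ⟨h * (↑u⁻¹ * T), ⟨↑u⁻¹ * T, ?_, rfl⟩, ?_⟩
    · exact hT.continuous_comp (↑u⁻¹ : H →L[ℂ] H).continuous
    · have hh : h = (↑u : H →L[ℂ] H) - (ε : ℂ) • 1 := by
        rw [hua, ha, add_sub_cancel_right]
      have hDT : T - h * ((↑u⁻¹ : H →L[ℂ] H) * T) = (ε : ℂ) • ((↑u⁻¹ : H →L[ℂ] H) * T) := by
        rw [hh, sub_mul, smul_mul_assoc, one_mul, ← mul_assoc, u.mul_inv, one_mul]
        abel
      rw [dist_eq_norm, hDT]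
      have hbnd : ‖(ε : ℂ) • ((↑u⁻¹ : H →L[ℂ] H) * T)‖ ≤ 3 * δ / 4 := by
        refine ContinuousLinearMap.opNorm_le_bound' _ (by positivity) fun x hx => ?_
        have hxpos : (0:ℝ) < ‖x‖ := lt_of_le_of_ne (norm_nonneg x) (Ne.symm hx)
        set x' : H := ‖x‖⁻¹ • x with hx'
        have hnx' : ‖x'‖ = 1 := by
          rw [hx', norm_smul, norm_inv, norm_norm, inv_mul_cancel₀ hx]
        have hkey := hx1 x' hnx'.le
        have happ : ((ε : ℂ) • ((↑u⁻¹ : H →L[ℂ] H) * T)) x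
            = ‖x‖ • (((ε : ℂ) • ((↑u⁻¹ : H →L[ℂ] H) * T)) x') := by
          rw [← ContinuousLinearMap.map_smul_of_tower]
          congr 1
          rw [hx', smul_smul, mul_inv_cancel₀ hx, one_smul]
        rw [happ, norm_smul, Real.norm_of_nonneg hxpos.le]
        have : (((ε : ℂ) • ((↑u⁻¹ : H →L[ℂ] H) * T)) x')
            = (ε : ℂ) • ((↑u⁻¹ : H →L[ℂ] H) (T x')) := by
          simp [ContinuousLinearMap.mul_apply]
        rw [this]
        calc ‖x‖ * ‖(ε : ℂ) • ((↑u⁻¹ : H →L[ℂ] H) (T x'))‖ ≤ ‖x‖ * (3 * δ / 4) :=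
              mul_le_mul_of_nonneg_left hkey hxpos.le
          _ = 3 * δ / 4 * ‖x‖ := by ring
      linarith
  · intro hcl
    rw [Metric.denseRange_iff]
    intro ξ r hr
    rcases eq_or_ne ξ 0 with rfl | hξ
    · exact ⟨0, by simpa using hr⟩
    have hξpos : (0:ℝ) < ‖ξ‖ := norm_pos_iff.mpr hξ
    set T : H →L[ℂ] H := (innerSL ℂ ξ).smulRight ξ with hT
    have hTapp : ∀ x : H, T x = ⟪ξ, x⟫_ℂ • ξ := fun x => rfl
    have hTc : IsCompactOperator T := by
      refine ⟨(fun c : ℂ => c • ξ) '' Metric.closedBall 0 ‖ξ‖,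
        (isCompact_closedBall 0 ‖ξ‖).image (continuous_id.smul continuous_const), ?_⟩
      refine Filter.mem_of_superset (Metric.closedBall_mem_nhds 0 one_pos) ?_
      intro x hx
      refine ⟨⟪ξ, x⟫_ℂ, ?_, (hTapp x).symm⟩
      rw [Metric.mem_closedBall, dist_zero_right]
      calc ‖⟪ξ, x⟫_ℂ‖ ≤ ‖ξ‖ * ‖x‖ := norm_inner_le_norm _ _
        _ ≤ ‖ξ‖ * 1 := by
            have : ‖x‖ ≤ 1 := by simpa [Metric.mem_closedBall, dist_zero_right] using hx
            exact mul_le_mul_of_nonneg_left this (norm_nonneg ξ)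
        _ = ‖ξ‖ := mul_one _
    have hmem := hcl T hTc
    rw [Metric.mem_closure_iff] at hmem
    obtain ⟨S, ⟨K, hKc, rfl⟩, hdist⟩ := hmem (r * ‖ξ‖ / 2) (by positivity)
    rw [dist_eq_norm] at hdist
    set y : H := ((‖ξ‖ : ℂ) ^ 2)⁻¹ • (K ξ) with hy
    refine ⟨y, ?_⟩
    have hTξ : T ξ = ((‖ξ‖ : ℂ) ^ 2) • ξ := by
      rw [hTapp, inner_self_eq_norm_sq_to_K]
      norm_num
    have hne : ((‖ξ‖ : ℂ) ^ 2) ≠ 0 := by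
      simp only [ne_eq, pow_eq_zero_iff, Complex.ofReal_eq_zero, OfNat.ofNat_ne_zero,
        not_false_eq_true]
      exact fun hc => hξ (norm_eq_zero.mp (by exact_mod_cast hc))
    have hsub : ξ - h y = ((‖ξ‖ : ℂ) ^ 2)⁻¹ • (T ξ - h (K ξ)) := by
      rw [hy, map_smul, smul_sub, hTξ, inv_smul_smul₀ hne]
    have hnorm : ‖T ξ - h (K ξ)‖ < r * ‖ξ‖ / 2 * ‖ξ‖ := by
      have h1 : ‖(T - h * K) ξ‖ ≤ ‖T - h * K‖ * ‖ξ‖ := le_opNorm _ _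
      have h2 : (T - h * K) ξ = T ξ - h (K ξ) := by
        simp [ContinuousLinearMap.sub_apply, ContinuousLinearMap.mul_apply]
      rw [h2] at h1
      calc ‖T ξ - h (K ξ)‖ ≤ ‖T - h * K‖ * ‖ξ‖ := h1
        _ < r * ‖ξ‖ / 2 * ‖ξ‖ := by
            exact mul_lt_mul_of_pos_right hdist hξpos
    rw [dist_eq_norm, hsub, norm_smul]
    have hninv : ‖((‖ξ‖ : ℂ) ^ 2)⁻¹‖ = (‖ξ‖ ^ 2)⁻¹ := by
      rw [norm_inv, norm_pow, Complex.norm_real, Real.norm_of_nonneg (norm_nonneg ξ)]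
    rw [hninv]
    calc (‖ξ‖ ^ 2)⁻¹ * ‖T ξ - h (K ξ)‖ < (‖ξ‖ ^ 2)⁻¹ * (r * ‖ξ‖ / 2 * ‖ξ‖) := by
          exact mul_lt_mul_of_pos_left hnorm (by positivity)
      _ = r / 2 := by field_simp
      _ < r := by linarith
end
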